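/- If θ < N/2 and W is symmetric with nonnegative entries and zero diagonal, then the potential function Φ_W is maximized over {0,1}^N at a = 𝟙, i.e., Φ_W(𝟙) ≥ Φ_W(a) for all a ∈ {0,1}^N. -/

import Mathlib

/-!
With `A = aᵀWa`, `B = 𝟙ᵀWa` and `S = 𝟙ᵀW𝟙` we have `Φ(𝟙) - Φ(a) = (S - A)/2 - (θ/N)(S - B)`.
Since `W ≥ 0` and `0 ≤ a ≤ 𝟙`, `A ≤ B ≤ S`; as `θ/N < 1/2`, the first term dominates the second.
-/

open Matrix

section NonnegMatrix

variable {R m n : Type*} [Semiring R] [PartialOrder R] [IsOrderedRing R] [Fintype n]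
  {W : Matrix m n R}

theorem Matrix.mulVec_nonneg_of_nonneg (hW : ∀ i j, 0 ≤ W i j) {v : n → R} (hv : 0 ≤ v) :
    0 ≤ W *ᵥ v :=
  fun i => dotProduct_nonneg_of_nonneg (hW i) hv

theorem Matrix.mulVec_le_mulVec_of_nonneg (hW : ∀ i j, 0 ≤ W i j) {u v : n → R} (huv : u ≤ v) :
    W *ᵥ u ≤ W *ᵥ v :=
  fun i => dotProduct_le_dotProduct_of_nonneg_left huv (hW i)

end NonnegMatrix

section OrderedField

variable {K : Type*} [Field K] [LinearOrder K] [IsStrictOrderedRing K]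

theorem div_natCast_lt_half {θ : K} {N : ℕ} (hθ : θ < N / 2) : θ / N < 1 / 2 := by
  rcases N.eq_zero_or_pos with rfl | hN
  · simp -- `θ / 0 = 0`
  · rw [div_lt_iff₀ (by exact_mod_cast hN)]
    linarith

theorem half_sub_mul_le_half_sub_mul {c A B S : K} (hc : c ≤ 1 / 2) (hAB : A ≤ B)
    (hBS : B ≤ S) : A / 2 - c * B ≤ S / 2 - c * S := by
  have hloss : c * (S - B) ≤ 1 / 2 * (S - B) := mul_le_mul_of_nonneg_right hc (sub_nonneg.2 hBS)
  linarith

end OrderedField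

theorem potential_maximized_at_one_general (N : ℕ) (θ : ℝ)
    (hθ : θ < N / 2)
    (W : Matrix (Fin N) (Fin N) ℝ)
    (hrange : ∀ i j, W i j ∈ Set.Icc (0:ℝ) 1)
    (Φ : (Fin N → ℝ) → ℝ)
    (hΦ : ∀ a, Φ a = (1/2) * (a ⬝ᵥ W.mulVec a)
        - (θ / N) * ((fun _ => (1:ℝ)) ⬝ᵥ W.mulVec a)
        + (θ / (2 * N)) * ((fun _ => (1:ℝ)) ⬝ᵥ W.mulVec (fun _ => (1:ℝ)))) :
    ∀ a : Fin N → ℝ, (∀ j, a j = 0 ∨ a j = 1) →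
      Φ a ≤ Φ (fun _ => (1:ℝ)) := by
  intro a ha
  have hW : ∀ i j, 0 ≤ W i j := fun i j => (hrange i j).1
  have ha0 : 0 ≤ a := fun j => by rcases ha j with h | h <;> simp [h]
  have ha1 : a ≤ 1 := fun j => by rcases ha j with h | h <;> simp [h]
  have hAB : a ⬝ᵥ W *ᵥ a ≤ 1 ⬝ᵥ W *ᵥ a :=
    dotProduct_le_dotProduct_of_nonneg_right ha1 (mulVec_nonneg_of_nonneg hW ha0)
  have hBS : 1 ⬝ᵥ W *ᵥ a ≤ 1 ⬝ᵥ W *ᵥ 1 :=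
    dotProduct_le_dotProduct_of_nonneg_left (mulVec_le_mulVec_of_nonneg hW ha1) zero_le_one
  have key := half_sub_mul_le_half_sub_mul (div_natCast_lt_half hθ).le hAB hBS
  rw [hΦ, hΦ, ← Pi.one_def]
  linarith

theorem potential_maximized_at_one (N : ℕ) (hN : 1 ≤ N) (θ : ℝ)
    (hθ : θ < N / 2)
    (W : Matrix (Fin N) (Fin N) ℝ) (hsym : W.IsSymm)
    (hrange : ∀ i j, W i j ∈ Set.Icc (0:ℝ) 1) (hdiag : ∀ i, W i i = 0)
    (Φ : (Fin N → ℝ) → ℝ)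
    (hΦ : ∀ a, Φ a = (1/2) * (a ⬝ᵥ W.mulVec a)
        - (θ / N) * ((fun _ => (1:ℝ)) ⬝ᵥ W.mulVec a)
        + (θ / (2 * N)) * ((fun _ => (1:ℝ)) ⬝ᵥ W.mulVec (fun _ => (1:ℝ)))) :
    ∀ a : Fin N → ℝ, (∀ j, a j = 0 ∨ a j = 1) →
      Φ a ≤ Φ (fun _ => (1:ℝ)) :=
  potential_maximized_at_one_general N θ hθ W hrange Φ hΦ
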